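/- Suppose Z ≤ 1/e and n ≥ max{8e, 16·ln(1/Z)}. For any real bit sequence b_1,…,b_T with |b_t| ≤ 1, ρ = 1 − 1/n, and the DNP deviation sequence x_t with potential Φ_t, the discounted payoff satisfies ∑_{t=1}^T ρ^{T−t}·g(x_t)·b_t ≥ ∑_{t=1}^T ρ^{T−t}·b_t + ∑_{t=1}^T (ρ^{T−t}/n)·(x_t·g(x_t)/2 − Φ_t) − Z/(2(1−ρ)) − x_{T+1}. -/

import Mathlib

/-!
`g̃` solves the linear ODE `g̃' = Z/8 + x g̃ / (8n)` with `g̃(0) = 0`, so by the mean value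
theorem `g(x) - g(y) ≤ (x - y) (Z/8 + x g(x) / (8n))` for `y ≤ x`, also across the clamp at `1`.
Writing `x_{t+1} = x_t + δ` with `δ = b_t - x_t / n`, monotonicity of `g` gives
`Φ_{t+1} - Φ_t ≤ δ g(x_{t+1})`; since `|x_t| ≤ n` keeps `|δ| ≤ 2`, the Lipschitz bound turns
this into `Φ_{t+1} - ρ Φ_t ≤ g(x_t) b_t - (x_t g(x_t) / 2 - Φ_t) / n + Z / 2`.
Summing with weights `ρ^{T-t}` telescopes, and `Φ ≥ 0` together with
`∑ ρ^{T-t} b_t = x_{T+1}` ends the proof.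
-/
noncomputable def erf (x : ℝ) : ℝ := ∫ s in (0:ℝ)..x, Real.exp (-(s ^ 2) / 2)

noncomputable def gtilde (n Z x : ℝ) : ℝ :=
  Real.sqrt (n / 8) * Z * erf (x / Real.sqrt (8 * n)) * Real.exp (x ^ 2 / (16 * n))

/-- `g` is the projection of `g̃` onto `[0,1]`. -/
noncomputable def gfun (n Z x : ℝ) : ℝ := min (max (gtilde n Z x) 0) 1

/-- The potential `Φ(x) = ∫_0^x g(s) ds`. -/
noncomputable def Phi (n Z x : ℝ) : ℝ := ∫ s in (0:ℝ)..x, gfun n Z s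

lemma erf_hasDerivAt (x : ℝ) : HasDerivAt erf (Real.exp (-(x ^ 2) / 2)) x :=
  (Continuous.integral_hasStrictDerivAt (by fun_prop) 0 x).hasDerivAt

lemma erf_monotone : Monotone erf :=
  monotone_of_hasDerivAt_nonneg erf_hasDerivAt fun _ => (Real.exp_pos _).le

lemma erf_zero : erf 0 = 0 := by simp [erf]

lemma erf_nonneg {x : ℝ} (hx : 0 ≤ x) : 0 ≤ erf x := erf_zero ▸ erf_monotone hx

lemma erf_nonpos {x : ℝ} (hx : x ≤ 0) : erf x ≤ 0 := erf_zero ▸ erf_monotone hx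

lemma Monotone.intervalIntegral_le_sub_mul {f : ℝ → ℝ} (hf : Monotone f) (a b : ℝ) :
    ∫ s in a..b, f s ≤ (b - a) * f b := by
  rcases le_total a b with hab | hba
  · simpa using intervalIntegral.integral_mono_on (μ := MeasureTheory.volume) hab
      hf.intervalIntegrable intervalIntegrable_const fun s hs => hf hs.2
  · have := intervalIntegral.integral_mono_on (μ := MeasureTheory.volume) hba
      intervalIntegrable_const hf.intervalIntegrable fun s hs => hf hs.1
    rw [intervalIntegral.integral_symm]
    simp only [intervalIntegral.integral_const, smul_eq_mul] at this
    linarith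

section
variable {n Z : ℝ}

/-- The Gaussian factor of `erf'` cancels the exponential factor of `g̃`. -/
lemma gtilde_hasDerivAt (hn : 0 < n) (x : ℝ) :
    HasDerivAt (gtilde n Z) (Z / 8 + x * gtilde n Z x / (8 * n)) x := by
  set K := Real.sqrt (8 * n)
  have hK : 0 < K := Real.sqrt_pos.2 (by positivity)
  have hKsq : K ^ 2 = 8 * n := Real.sq_sqrt (by positivity)
  have hsqrt : Real.sqrt (n / 8) = K / 8 := by
    rw [show n / 8 = (8 * n) / 8 ^ 2 by ring, Real.sqrt_div' _ (by norm_num),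
      Real.sqrt_sq (by norm_num)]
  have hcancel : Real.exp (-((x / K) ^ 2) / 2) * Real.exp (x ^ 2 / (16 * n)) = 1 := by
    rw [← Real.exp_add, div_pow, hKsq, ← Real.exp_zero]
    congr 1
    field_simp
    ring
  have h : HasDerivAt (gtilde n Z) _ x :=
    (((erf_hasDerivAt (x / K)).comp x ((hasDerivAt_id x).div_const K)).const_mul
      (Real.sqrt (n / 8) * Z)).mul ((hasDerivAt_pow 2 x).div_const (16 * n)).exp
  have hg : gtilde n Z x = Real.sqrt (n / 8) * Z * erf (x / K) * Real.exp (x ^ 2 / (16 * n)) :=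
    rfl
  refine h.congr_deriv ?_
  calc _ = Real.sqrt (n / 8) * Z / K * (Real.exp (-((x / K) ^ 2) / 2) * Real.exp (x ^ 2 / (16 * n)))
        + x * gtilde n Z x / (8 * n) := by
        rw [hg]; simp only [Function.comp_apply, id]; push_cast; ring
    _ = _ := by rw [hcancel, hsqrt]; field_simp

lemma gtilde_nonneg (hZ : 0 ≤ Z) {x : ℝ} (hx : 0 ≤ x) : 0 ≤ gtilde n Z x := by
  have := erf_nonneg (div_nonneg hx (Real.sqrt_nonneg (8 * n)))
  unfold gtilde
  positivity

lemma gtilde_nonpos (hZ : 0 ≤ Z) {x : ℝ} (hx : x ≤ 0) : gtilde n Z x ≤ 0 :=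
  mul_nonpos_of_nonpos_of_nonneg
    (mul_nonpos_of_nonneg_of_nonpos (by positivity)
      (erf_nonpos (div_nonpos_of_nonpos_of_nonneg hx (Real.sqrt_nonneg _))))
    (Real.exp_pos _).le

lemma mul_gtilde_nonneg (hZ : 0 ≤ Z) (x : ℝ) : 0 ≤ x * gtilde n Z x := by
  rcases le_total 0 x with hx | hx
  · exact mul_nonneg hx (gtilde_nonneg hZ hx)
  · exact mul_nonneg_of_nonpos_of_nonpos hx (gtilde_nonpos hZ hx)

lemma gtilde_monotone (hn : 0 < n) (hZ : 0 ≤ Z) : Monotone (gtilde n Z) :=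
  monotone_of_hasDerivAt_nonneg (gtilde_hasDerivAt hn) fun x => by
    have := mul_gtilde_nonneg (n := n) hZ x
    positivity

lemma gtilde_zero : gtilde n Z 0 = 0 := by simp [gtilde, erf_zero]

lemma gtilde_continuous (hn : 0 < n) : Continuous (gtilde n Z) :=
  continuous_iff_continuousAt.2 fun x => (gtilde_hasDerivAt hn x).continuousAt

lemma gtilde_sub_le (hn : 0 < n) (hZ : 0 ≤ Z) {x y : ℝ} (hy : 0 ≤ y) (hyx : y ≤ x) :
    gtilde n Z x - gtilde n Z y ≤ (x - y) * (Z / 8 + x * gtilde n Z x / (8 * n)) := by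
  rcases hyx.eq_or_lt with rfl | hlt
  · simp
  obtain ⟨c, hc, hslope⟩ := exists_hasDerivAt_eq_slope (gtilde n Z) _ hlt
    (gtilde_continuous hn).continuousOn fun c _ => gtilde_hasDerivAt hn c
  have hc0 : 0 ≤ c := hy.trans hc.1.le
  have hderiv : c * gtilde n Z c ≤ x * gtilde n Z x :=
    mul_le_mul hc.2.le (gtilde_monotone hn hZ hc.2.le) (gtilde_nonneg hZ hc0) (hc0.trans hc.2.le)
  rw [eq_div_iff (sub_pos.2 hlt).ne'] at hslope
  rw [← hslope, mul_comm]
  gcongr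

lemma gfun_nonneg {x : ℝ} : 0 ≤ gfun n Z x := le_min (le_max_right _ _) zero_le_one

lemma gfun_le_one {x : ℝ} : gfun n Z x ≤ 1 := min_le_right _ _

lemma gfun_of_nonpos (hZ : 0 ≤ Z) {x : ℝ} (hx : x ≤ 0) : gfun n Z x = 0 := by
  rw [gfun, max_eq_right (gtilde_nonpos hZ hx), min_eq_left zero_le_one]

lemma gfun_eq_gtilde (hZ : 0 ≤ Z) {x : ℝ} (hx : 0 ≤ x) (h1 : gtilde n Z x ≤ 1) :
    gfun n Z x = gtilde n Z x := by
  rw [gfun, max_eq_left (gtilde_nonneg hZ hx), min_eq_left h1]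

lemma gfun_eq_one {x : ℝ} (h1 : 1 ≤ gtilde n Z x) : gfun n Z x = 1 := by
  rw [gfun, max_eq_left (zero_le_one.trans h1), min_eq_right h1]

lemma gfun_monotone (hn : 0 < n) (hZ : 0 ≤ Z) : Monotone (gfun n Z) := fun _ _ hab =>
  min_le_min_right 1 (max_le_max_right 0 (gtilde_monotone hn hZ hab))

lemma mul_gfun_nonneg (hZ : 0 ≤ Z) (x : ℝ) : 0 ≤ x * gfun n Z x := by
  rcases le_total 0 x with hx | hx
  · exact mul_nonneg hx gfun_nonneg
  · rw [gfun_of_nonpos hZ hx, mul_zero]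

/-- Where `g` is clamped at `1`, the intermediate value theorem locates the point at which `g̃`
reaches `1`. -/
lemma gfun_sub_le (hn : 0 < n) (hZ : 0 ≤ Z) {x y : ℝ} (hyx : y ≤ x) :
    gfun n Z x - gfun n Z y ≤ (x - y) * (Z / 8 + x * gfun n Z x / (8 * n)) := by
  have hgx0 : 0 ≤ gfun n Z x := gfun_nonneg
  have hrhs : 0 ≤ (x - y) * (Z / 8 + x * gfun n Z x / (8 * n)) := by
    have := mul_gfun_nonneg (n := n) hZ x
    have := sub_nonneg.2 hyx
    positivity
  rcases le_total x 0 with hx | hx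
  · linarith [gfun_of_nonpos (n := n) hZ hx, gfun_of_nonpos (n := n) hZ (hyx.trans hx)]
  rcases le_total 1 (gtilde n Z y) with hy1 | hy1
  · linarith [gfun_le_one (n := n) (Z := Z) (x := x), gfun_eq_one hy1]
  obtain ⟨y', hy'0, hyy', hy'x, hgy⟩ :
      ∃ y', 0 ≤ y' ∧ y ≤ y' ∧ y' ≤ x ∧ gfun n Z y = gtilde n Z y' := by
    rcases le_total y 0 with hy | hy
    · exact ⟨0, le_rfl, hy, hx, by rw [gfun_of_nonpos hZ hy, gtilde_zero]⟩
    · exact ⟨y, hy, le_rfl, hyx, gfun_eq_gtilde hZ hy hy1⟩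
  obtain ⟨u, hu, hgu⟩ : ∃ u ∈ Set.Icc y' x, gtilde n Z u = gfun n Z x := by
    rcases le_total (gtilde n Z x) 1 with hx1 | hx1
    · exact ⟨x, ⟨hy'x, le_rfl⟩, (gfun_eq_gtilde hZ hx hx1).symm⟩
    · rw [gfun_eq_one hx1]
      exact intermediate_value_Icc hy'x (gtilde_continuous hn).continuousOn
        ⟨hgy ▸ gfun_le_one, hx1⟩
  calc gfun n Z x - gfun n Z y = gtilde n Z u - gtilde n Z y' := by rw [hgy, hgu]
    _ ≤ (u - y') * (Z / 8 + u * gtilde n Z u / (8 * n)) := gtilde_sub_le hn hZ hy'0 hu.1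
    _ ≤ (x - y) * (Z / 8 + x * gfun n Z x / (8 * n)) := by
        rw [hgu]
        have hu0 : 0 ≤ u := hy'0.trans hu.1
        apply mul_le_mul (by linarith [hu.2]) _ (by positivity) (by linarith [hu.1, hu.2])
        gcongr
        exact hu.2

lemma gfun_le_of_le_one (hn : 1 ≤ n) (hZ : 0 ≤ Z) {x : ℝ} (hx : x ≤ 1) :
    gfun n Z x ≤ Z / 7 := by
  rcases le_total x 0 with hx0 | hx0
  · rw [gfun_of_nonpos hZ hx0]
    positivity
  have h := gfun_sub_le (n := n) (by linarith) hZ hx0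
  rw [gfun_of_nonpos hZ le_rfl, sub_zero, sub_zero] at h
  have hg : x * gfun n Z x / (8 * n) ≤ gfun n Z x / 8 := by
    rw [div_le_div_iff₀ (by positivity) (by norm_num)]
    nlinarith [mul_le_mul hx (hx.trans hn) hx0 zero_le_one, gfun_nonneg (n := n) (Z := Z) (x := x)]
  nlinarith [mul_gfun_nonneg (n := n) hZ x]

lemma gfun_add_sub_le (hn : 1 ≤ n) (hZ : 0 ≤ Z) {x δ : ℝ} (hx : 0 ≤ x) (hxn : x ≤ n)
    (hδ0 : 0 ≤ δ) (hδ1 : δ ≤ 1) :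
    gfun n Z (x + δ) - gfun n Z x ≤ Z / 2 + x * gfun n Z x / (2 * n) := by
  have hn0 : 0 < n := by linarith
  set G := gfun n Z x
  set D := gfun n Z (x + δ) - G with hD
  have hG0 : 0 ≤ G := gfun_nonneg
  have hD0 : 0 ≤ D := sub_nonneg.2 (gfun_monotone hn0 hZ (by linarith))
  have hL : D ≤ δ * (Z / 8 + (x + δ) * (G + D) / (8 * n)) := by
    simpa only [hD, add_sub_cancel_left, add_sub_cancel] using
      gfun_sub_le hn0 hZ (show x ≤ x + δ by linarith)
  have hGD : 0 ≤ G + D := by positivity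
  have h8 : 8 * n * D ≤ n * Z + (x + 1) * (G + D) :=
    calc 8 * n * D ≤ 8 * n * (δ * (Z / 8 + (x + δ) * (G + D) / (8 * n))) := by gcongr
      _ = δ * (n * Z + (x + δ) * (G + D)) := by field_simp
      _ ≤ n * Z + (x + δ) * (G + D) := mul_le_of_le_one_left (by positivity) hδ1
      _ ≤ n * Z + (x + 1) * (G + D) := by gcongr
  have h6 : 6 * n * D ≤ n * Z + (x + 1) * G := by
    nlinarith [mul_le_mul_of_nonneg_right (show x + 1 ≤ 2 * n by linarith) hD0]
  have hGsmall : G ≤ 2 * n * Z + 2 * x * G := by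
    rcases le_total x (1 / 2) with hx2 | hx2
    · have := gfun_le_of_le_one (n := n) hn hZ (show x ≤ 1 by linarith)
      nlinarith
    · nlinarith
  rw [div_add_div _ _ (by norm_num) (by positivity), le_div_iff₀ (by positivity)]
  nlinarith

lemma mul_gfun_add_sub_le (hn : 1 ≤ n) (hZ : 0 ≤ Z) {x δ : ℝ} (hxn : |x| ≤ n)
    (hδ : |δ + x / n| ≤ 1) :
    δ * (gfun n Z (x + δ) - gfun n Z x) ≤ Z / 2 + x * gfun n Z x / (2 * n) := by
  have hn0 : 0 < n := by linarith
  obtain ⟨hxl, hxu⟩ := abs_le.1 hxn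
  obtain ⟨hδl, hδu⟩ := abs_le.1 hδ
  have hxn1 : -1 ≤ x / n := by rw [le_div_iff₀ hn0]; linarith
  have hxn2 : x / n ≤ 1 := by rw [div_le_one hn0]; linarith
  rcases le_total x 0 with hx | hx
  · rw [gfun_of_nonpos hZ hx, mul_zero, zero_div, add_zero, sub_zero]
    rcases le_total δ 0 with hδ0 | hδ0
    · nlinarith [gfun_nonneg (n := n) (Z := Z) (x := x + δ)]
    · have hxx : x ≤ x / n := by rw [le_div_iff₀ hn0]; nlinarith
      calc δ * gfun n Z (x + δ) ≤ 2 * (Z / 7) :=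
            mul_le_mul (by linarith) (gfun_le_of_le_one hn hZ (by linarith)) gfun_nonneg
              (by norm_num)
        _ ≤ Z / 2 := by linarith
  · have hx0 : 0 ≤ x / n := by positivity
    rcases le_total δ 0 with hδ0 | hδ0
    · have hL := gfun_sub_le hn0 hZ (show x + δ ≤ x by linarith)
      rw [sub_add_cancel_left] at hL
      have hS : 0 ≤ Z / 8 + x * gfun n Z x / (8 * n) := by
        have := mul_gfun_nonneg (n := n) hZ x
        positivity
      calc δ * (gfun n Z (x + δ) - gfun n Z x) = -δ * (gfun n Z x - gfun n Z (x + δ)) := by ring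
        _ ≤ -δ * (-δ * (Z / 8 + x * gfun n Z x / (8 * n))) := by gcongr; linarith
        _ = δ ^ 2 * (Z / 8 + x * gfun n Z x / (8 * n)) := by ring
        _ ≤ 4 * (Z / 8 + x * gfun n Z x / (8 * n)) := by gcongr; nlinarith
        _ = Z / 2 + x * gfun n Z x / (2 * n) := by field_simp; ring
    · calc δ * (gfun n Z (x + δ) - gfun n Z x) ≤ 1 * (gfun n Z (x + δ) - gfun n Z x) :=
            mul_le_mul_of_nonneg_right (by linarith)
              (sub_nonneg.2 (gfun_monotone hn0 hZ (by linarith)))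
        _ ≤ Z / 2 + x * gfun n Z x / (2 * n) := by
            rw [one_mul]
            exact gfun_add_sub_le hn hZ hx hxu hδ0 (by linarith)

lemma Phi_sub_le (hn : 0 < n) (hZ : 0 ≤ Z) (x y : ℝ) :
    Phi n Z y - Phi n Z x ≤ (y - x) * gfun n Z y := by
  have hg := gfun_monotone hn hZ
  rw [Phi, Phi, intervalIntegral.integral_interval_sub_left hg.intervalIntegrable
    hg.intervalIntegrable]
  exact hg.intervalIntegral_le_sub_mul x y

lemma Phi_nonneg (hn : 0 < n) (hZ : 0 ≤ Z) (x : ℝ) : 0 ≤ Phi n Z x := by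
  have h := Phi_sub_le hn hZ x 0
  rw [Phi, intervalIntegral.integral_same, gfun_of_nonpos hZ le_rfl, mul_zero] at h
  linarith

lemma Phi_step_le (hn : 1 ≤ n) (hZ : 0 ≤ Z) {x b : ℝ} (hx : |x| ≤ n) (hb : |b| ≤ 1) :
    Phi n Z ((1 - 1 / n) * x + b) - (1 - 1 / n) * Phi n Z x - Z / 2 ≤
      gfun n Z x * b - (x * gfun n Z x / 2 - Phi n Z x) / n := by
  have hn0 : 0 < n := by linarith
  obtain ⟨δ, rfl⟩ : ∃ δ, b = δ + x / n := ⟨b - x / n, by ring⟩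
  have hinc := mul_gfun_add_sub_le hn hZ hx hb
  have hPhi := Phi_sub_le hn0 hZ x (x + δ)
  rw [show (1 - 1 / n) * x + (δ + x / n) = x + δ by ring]
  rw [add_sub_cancel_left] at hPhi
  have hexp : gfun n Z x * (δ + x / n) - (x * gfun n Z x / 2 - Phi n Z x) / n
      = δ * gfun n Z x + x * gfun n Z x / (2 * n) + Phi n Z x / n := by
    field_simp; ring
  rw [hexp]
  linear_combination hPhi + hinc

end

lemma discounted_sum_telescope (ρ : ℝ) (a : ℕ → ℝ) (T : ℕ) :
    ∑ t ∈ Finset.Icc 1 T, ρ ^ (T - t) * (a (t + 1) - ρ * a t) = a (T + 1) - ρ ^ T * a 1 := by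
  induction T with
  | zero => simp
  | succ T ih =>
    rw [Finset.sum_Icc_succ_top (by omega), Nat.sub_self, pow_zero, one_mul]
    have hshift : ∀ t ∈ Finset.Icc 1 T, ρ ^ (T + 1 - t) * (a (t + 1) - ρ * a t)
        = ρ * (ρ ^ (T - t) * (a (t + 1) - ρ * a t)) := by
      intro t ht
      rw [Nat.sub_add_comm (Finset.mem_Icc.1 ht).2, pow_succ]
      ring
    rw [Finset.sum_congr rfl hshift, ← Finset.mul_sum, ih]
    ring

section Discounted
variable {ρ : ℝ} {T : ℕ}

lemma discounted_sum_eq_of_rec {a c : ℕ → ℝ}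
    (h : ∀ t ∈ Finset.Icc 1 T, a (t + 1) = ρ * a t + c t) :
    ∑ t ∈ Finset.Icc 1 T, ρ ^ (T - t) * c t = a (T + 1) - ρ ^ T * a 1 := by
  rw [← discounted_sum_telescope]
  exact Finset.sum_congr rfl fun t ht => by rw [h t ht, add_sub_cancel_left]

lemma sub_pow_mul_le_discounted_sum (hρ : 0 ≤ ρ) {a c : ℕ → ℝ}
    (h : ∀ t ∈ Finset.Icc 1 T, a (t + 1) - ρ * a t ≤ c t) :
    a (T + 1) - ρ ^ T * a 1 ≤ ∑ t ∈ Finset.Icc 1 T, ρ ^ (T - t) * c t := by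
  rw [← discounted_sum_telescope]
  exact Finset.sum_le_sum fun t ht => mul_le_mul_of_nonneg_left (h t ht) (pow_nonneg hρ _)

lemma abs_le_of_discounted_rec {n : ℝ} (hn : 1 ≤ n) {b x : ℕ → ℝ}
    (hb : ∀ t ∈ Finset.Icc 1 T, |b t| ≤ 1) (hx1 : |x 1| ≤ n)
    (hrec : ∀ t ∈ Finset.Icc 1 T, x (t + 1) = (1 - 1 / n) * x t + b t) :
    ∀ t ∈ Finset.Icc 1 (T + 1), |x t| ≤ n := by
  have hρ : 0 ≤ 1 - 1 / n := by rw [sub_nonneg, div_le_one (by linarith)]; exact hn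
  intro t ht
  obtain ⟨h1, h2⟩ := Finset.mem_Icc.1 ht
  induction t, h1 using Nat.le_induction with
  | base => exact hx1
  | succ k hk ih =>
    have hkT : k ∈ Finset.Icc 1 T := Finset.mem_Icc.2 ⟨hk, by omega⟩
    rw [hrec k hkT]
    calc |(1 - 1 / n) * x k + b k| ≤ (1 - 1 / n) * |x k| + |b k| := by
          simpa only [abs_mul, abs_of_nonneg hρ] using abs_add_le ((1 - 1 / n) * x k) (b k)
      _ ≤ (1 - 1 / n) * n + 1 := by
          gcongr
          · exact ih (Finset.mem_Icc.2 ⟨hk, by omega⟩) (by omega)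
          · exact hb k hkT
      _ = n := by field_simp; ring

end Discounted

theorem dnp_discounted_payoff_rho_general
    (n Z : ℝ) (hn1 : 1 ≤ n) (hZpos : 0 < Z)
    (T : ℕ) (b : ℕ → ℝ) (hb : ∀ t ∈ Finset.Icc 1 T, |b t| ≤ 1)
    (ρ : ℝ) (hρ : ρ = 1 - 1 / n)
    (x : ℕ → ℝ) (hx1 : x 1 = 0)
    (hxrec : ∀ t, 1 ≤ t → t ≤ T → x (t + 1) = ρ * x t + b t) :
    ∑ t ∈ Finset.Icc 1 T, ρ ^ (T - t) * gfun n Z (x t) * b t ≥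
      ∑ t ∈ Finset.Icc 1 T, ρ ^ (T - t) * b t
        + ∑ t ∈ Finset.Icc 1 T, ρ ^ (T - t) / n * (x t * gfun n Z (x t) / 2 - Phi n Z (x t))
        - Z / (2 * (1 - ρ)) - x (T + 1) := by
  have hn0 : 0 < n := by linarith
  have hρ0 : 0 ≤ ρ := by rw [hρ, sub_nonneg, div_le_one hn0]; exact hn1
  have hρn : n * (1 - ρ) = 1 := by rw [hρ]; field_simp; ring
  have hrec : ∀ t ∈ Finset.Icc 1 T, x (t + 1) = ρ * x t + b t := fun t ht =>
    hxrec t (Finset.mem_Icc.1 ht).1 (Finset.mem_Icc.1 ht).2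
  have hxn := abs_le_of_discounted_rec hn1 hb (by rw [hx1, abs_zero]; linarith) (hρ ▸ hrec)
  -- shifting `Φ` by `n Z / 2 = Z / (2 (1 - ρ))` absorbs the slack `Z / 2` of each step
  have hpot := sub_pow_mul_le_discounted_sum hρ0 (a := fun t => Phi n Z (x t) - n * Z / 2)
    (c := fun t => gfun n Z (x t) * b t - (x t * gfun n Z (x t) / 2 - Phi n Z (x t)) / n)
    fun t ht => by
      have := Phi_step_le hn1 hZpos.le (hxn t (Finset.Icc_subset_Icc_right T.le_succ ht))
        (hb t ht)
      rw [← hρ, ← hrec t ht] at this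
      linear_combination this - Z / 2 * hρn
  have hsplit : ∑ t ∈ Finset.Icc 1 T, ρ ^ (T - t) *
        (gfun n Z (x t) * b t - (x t * gfun n Z (x t) / 2 - Phi n Z (x t)) / n) =
      ∑ t ∈ Finset.Icc 1 T, ρ ^ (T - t) * gfun n Z (x t) * b t -
        ∑ t ∈ Finset.Icc 1 T, ρ ^ (T - t) / n * (x t * gfun n Z (x t) / 2 - Phi n Z (x t)) := by
    rw [← Finset.sum_sub_distrib]
    exact Finset.sum_congr rfl fun t _ => by ring
  have hPhi1 : Phi n Z (x 1) = 0 := by simp [hx1, Phi]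
  rw [hsplit, hPhi1] at hpot
  rw [ge_iff_le, discounted_sum_eq_of_rec hrec, hx1, show Z / (2 * (1 - ρ)) = n * Z / 2 by
    rw [div_eq_iff (by rw [hρ, sub_sub_cancel]; positivity)]; linear_combination -Z * hρn]
  have := Phi_nonneg hn0 hZpos.le (x (T + 1))
  have : 0 ≤ ρ ^ T * (n * Z / 2) := by positivity
  linarith

/-- discounted payoff lower bound for DNP (plain updating) at its
own discount factor `ρ = 1 - 1/n`, in terms of the potential and `x_{T+1}`. -/
theorem dnp_discounted_payoff_rho
    (n Z : ℝ) (hn1 : 1 ≤ n) (hZpos : 0 < Z) (hZ : Z ≤ 1 / Real.exp 1)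
    (hn : n ≥ max (8 * Real.exp 1) (16 * Real.log (1 / Z)))
    (T : ℕ) (b : ℕ → ℝ) (hb : ∀ t ∈ Finset.Icc 1 T, |b t| ≤ 1)
    (ρ : ℝ) (hρ : ρ = 1 - 1 / n)
    (x : ℕ → ℝ) (hx1 : x 1 = 0)
    (hxrec : ∀ t, 1 ≤ t → t ≤ T → x (t + 1) = ρ * x t + b t) :
    ∑ t ∈ Finset.Icc 1 T, ρ ^ (T - t) * gfun n Z (x t) * b t ≥
      ∑ t ∈ Finset.Icc 1 T, ρ ^ (T - t) * b t
        + ∑ t ∈ Finset.Icc 1 T, ρ ^ (T - t) / n * (x t * gfun n Z (x t) / 2 - Phi n Z (x t))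
        - Z / (2 * (1 - ρ)) - x (T + 1) :=
  dnp_discounted_payoff_rho_general n Z hn1 hZpos T b hb ρ hρ x hx1 hxrec
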